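/- arXiv:2001.09660 — 2 statements merged into one kernel-verified Lean document; each statement's English description precedes it below -/
import Mathlib

section
/- Let (X, μ) be a measure space, let p, q : X → (0,∞) be measurable, let α ∈ (0,1), and let f, g : (0,∞) → ℝ be continuous strictly increasing functions such that f ∘ g⁻¹ is strictly convex on the range of g. Assume x ↦ M^f_{1−α}(p(x),q(x)) − M^g_{1−α}(p(x),q(x)) is μ-integrable. Then the quasi-arithmetic α-divergence I_α^{f,g}[p:q] = (1/(α(1−α))) ∫ (M^f_{1−α}(p,q) − M^g_{1−α}(p,q)) dμ satisfies I_α^{f,g}[p:q] ≥ 0, with I_α^{f,g}[p:q] = 0 if and only if p = q μ-almost everywhere. -/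
/-!
Write `M_f` and `M_g` for the two quasi-arithmetic means of `a, b > 0`. Since `g(M_g)` is the
weighted mean of `g a` and `g b`, strict convexity of `f ∘ g⁻¹` gives
`f(M_g) = (f ∘ g⁻¹)(g(M_g)) < α f a + (1 - α) f b = f(M_f)` whenever `a ≠ b`, so `M_g < M_f` by
monotonicity of `f`, while both means equal `a` when `a = b`. The integrand of the divergence is
therefore nonnegative and vanishes exactly where `p = q`.
-/

open Set MeasureTheory

/-- The weight `α` sits on the first argument: this is `M^f_{1-α}(a, b)` in the paper's notation. -/
def quasiArithMean (f finv : ℝ → ℝ) (α a b : ℝ) : ℝ :=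
  finv (α * f a + (1 - α) * f b)

section QuasiArithMean

variable {s : Set ℝ} {f g finv ginv : ℝ → ℝ} {α a b : ℝ}

theorem quasiArithMean_self (hfinv : LeftInvOn finv f s) (ha : a ∈ s) :
    quasiArithMean f finv α a a = a := by
  rw [quasiArithMean, ← add_mul, add_sub_cancel, one_mul, hfinv ha]

theorem quasiArithMean_mem_and_apply (hconv : Convex ℝ (f '' s)) (hfinv : LeftInvOn finv f s)
    (ha : a ∈ s) (hb : b ∈ s) (hα : α ∈ Icc (0 : ℝ) 1) :
    quasiArithMean f finv α a b ∈ s ∧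
      f (quasiArithMean f finv α a b) = α * f a + (1 - α) * f b := by
  obtain ⟨c, hc, hfc⟩ : α * f a + (1 - α) * f b ∈ f '' s :=
    hconv (mem_image_of_mem f ha) (mem_image_of_mem f hb) hα.1 (sub_nonneg.2 hα.2) (by ring)
  rw [quasiArithMean, ← hfc, hfinv hc]
  exact ⟨hc, rfl⟩

theorem convex_image_of_continuousOn (hs : IsPreconnected s) (hf : ContinuousOn f s) :
    Convex ℝ (f '' s) :=
  (hs.image f hf).ordConnected.convex

theorem quasiArithMean_lt_quasiArithMean (hs : IsPreconnected s)
    (hf_mono : StrictMonoOn f s) (hf_cont : ContinuousOn f s)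
    (hfinv : LeftInvOn finv f s) (hginv : LeftInvOn ginv g s)
    (hconv : StrictConvexOn ℝ (g '' s) (f ∘ ginv))
    (ha : a ∈ s) (hb : b ∈ s) (hab : a ≠ b) (hα : α ∈ Ioo (0 : ℝ) 1) :
    quasiArithMean g ginv α a b < quasiArithMean f finv α a b := by
  obtain ⟨hMg, hgMg⟩ := quasiArithMean_mem_and_apply hconv.1 hginv ha hb (Ioo_subset_Icc_self hα)
  obtain ⟨hMf, hfMf⟩ := quasiArithMean_mem_and_apply (convex_image_of_continuousOn hs hf_cont)
    hfinv ha hb (Ioo_subset_Icc_self hα)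
  have hgab : g a ≠ g b := fun h => hab (hginv.injOn ha hb h)
  have hjensen := hconv.2 (mem_image_of_mem g ha) (mem_image_of_mem g hb) hgab hα.1
    (sub_pos.2 hα.2) (by ring)
  simp only [smul_eq_mul, Function.comp_apply, hginv ha, hginv hb] at hjensen
  rw [← hgMg, hginv hMg, ← hfMf] at hjensen
  exact (hf_mono.lt_iff_lt hMg hMf).1 hjensen

theorem quasiArithMean_sub_quasiArithMean_nonneg_and_eq_zero_iff (hs : IsPreconnected s)
    (hf_mono : StrictMonoOn f s) (hf_cont : ContinuousOn f s)
    (hfinv : LeftInvOn finv f s) (hginv : LeftInvOn ginv g s)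
    (hconv : StrictConvexOn ℝ (g '' s) (f ∘ ginv))
    (ha : a ∈ s) (hb : b ∈ s) (hα : α ∈ Ioo (0 : ℝ) 1) :
    0 ≤ quasiArithMean f finv α a b - quasiArithMean g ginv α a b ∧
      (quasiArithMean f finv α a b - quasiArithMean g ginv α a b = 0 ↔ a = b) := by
  rcases eq_or_ne a b with rfl | hab
  · simp [quasiArithMean_self hfinv ha, quasiArithMean_self hginv ha]
  · have hlt := quasiArithMean_lt_quasiArithMean hs hf_mono hf_cont hfinv hginv hconv ha hb hab hα
    exact ⟨(sub_pos.2 hlt).le, iff_of_false (sub_pos.2 hlt).ne' hab⟩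

end QuasiArithMean

theorem MeasureTheory.integral_eq_zero_iff_ae_of_nonneg {X : Type*} [MeasurableSpace X]
    {μ : Measure X} {F : X → ℝ} {P : X → Prop} (hF : 0 ≤ F) (hint : Integrable F μ)
    (hP : ∀ x, F x = 0 ↔ P x) :
    ∫ x, F x ∂μ = 0 ↔ ∀ᵐ x ∂μ, P x := by
  rw [integral_eq_zero_iff_of_nonneg hF hint]
  simp only [Filter.EventuallyEq, Pi.zero_apply, hP]

theorem qam_alpha_divergence_nonneg_general {X : Type*} [MeasurableSpace X] (μ : Measure X)
    (p q : X → ℝ)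
    (hppos : ∀ x, 0 < p x) (hqpos : ∀ x, 0 < q x)
    (α : ℝ) (hα : α ∈ Ioo (0 : ℝ) 1)
    (f g finv ginv : ℝ → ℝ)
    (hf_mono : StrictMonoOn f (Ioi 0)) (hf_cont : ContinuousOn f (Ioi 0))
    (hfinv : ∀ x ∈ Ioi (0 : ℝ), finv (f x) = x)
    (hginv : ∀ x ∈ Ioi (0 : ℝ), ginv (g x) = x)
    (hconv : StrictConvexOn ℝ (g '' Ioi 0) (f ∘ ginv))
    (hint : Integrable
      (fun x => finv (α * f (p x) + (1 - α) * f (q x)) -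
        ginv (α * g (p x) + (1 - α) * g (q x))) μ) :
    0 ≤ (1 / (α * (1 - α))) *
        ∫ x, (finv (α * f (p x) + (1 - α) * f (q x)) -
          ginv (α * g (p x) + (1 - α) * g (q x))) ∂μ ∧
      ((1 / (α * (1 - α))) *
        (∫ x, (finv (α * f (p x) + (1 - α) * f (q x)) -
          ginv (α * g (p x) + (1 - α) * g (q x))) ∂μ) = 0 ↔ p =ᵐ[μ] q) := by
  have hpointwise x := quasiArithMean_sub_quasiArithMean_nonneg_and_eq_zero_iff
    isPreconnected_Ioi hf_mono hf_cont hfinv hginv hconv (hppos x) (hqpos x) hα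
  have hcoeff : 0 < 1 / (α * (1 - α)) := one_div_pos.2 (mul_pos hα.1 (sub_pos.2 hα.2))
  have hintegral_eq_zero := integral_eq_zero_iff_ae_of_nonneg (fun x => (hpointwise x).1) hint
    (fun x => (hpointwise x).2)
  exact ⟨mul_nonneg hcoeff.le (integral_nonneg fun x => (hpointwise x).1),
    (mul_eq_zero_iff_left hcoeff.ne').trans hintegral_eq_zero⟩

/-- Nonnegativity and identity of indiscernibles for the
quasi-arithmetic α-divergence
I_α^{f,g}[p:q] = (1/(α(1−α))) ∫ (M^f_{1−α}(p,q) − M^g_{1−α}(p,q)) dμ,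
where M^f_{1−α}(a,b) = f⁻¹(α f(a) + (1−α) f(b)), for continuous strictly
increasing generators f, g with f ∘ g⁻¹ strictly convex on the range of g. -/
theorem qam_alpha_divergence_nonneg {X : Type*} [MeasurableSpace X] (μ : Measure X)
    (p q : X → ℝ) (hp : Measurable p) (hq : Measurable q)
    (hppos : ∀ x, 0 < p x) (hqpos : ∀ x, 0 < q x)
    (α : ℝ) (hα : α ∈ Ioo (0 : ℝ) 1)
    (f g finv ginv : ℝ → ℝ)
    (hf_mono : StrictMonoOn f (Ioi 0)) (hf_cont : ContinuousOn f (Ioi 0))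
    (hg_mono : StrictMonoOn g (Ioi 0)) (hg_cont : ContinuousOn g (Ioi 0))
    (hfinv : ∀ x ∈ Ioi (0 : ℝ), finv (f x) = x)
    (hginv : ∀ x ∈ Ioi (0 : ℝ), ginv (g x) = x)
    (hconv : StrictConvexOn ℝ (g '' Ioi 0) (f ∘ ginv))
    (hint : Integrable
      (fun x => finv (α * f (p x) + (1 - α) * f (q x)) -
        ginv (α * g (p x) + (1 - α) * g (q x))) μ) :
    0 ≤ (1 / (α * (1 - α))) *
        ∫ x, (finv (α * f (p x) + (1 - α) * f (q x)) -
          ginv (α * g (p x) + (1 - α) * g (q x))) ∂μ ∧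
      ((1 / (α * (1 - α))) *
        (∫ x, (finv (α * f (p x) + (1 - α) * f (q x)) -
          ginv (α * g (p x) + (1 - α) * g (q x))) ∂μ) = 0 ↔ p =ᵐ[μ] q) :=
  qam_alpha_divergence_nonneg_general μ p q hppos hqpos α hα f g finv ginv hf_mono hf_cont hfinv
    hginv hconv hint
end

section
/- Let f, g : (0,∞) → ℝ be differentiable strictly increasing functions with f′ > 0 and g′ > 0 such that F = f ∘ g⁻¹ is differentiable and strictly convex on the range of g. Then for all p, q > 0: E_f(p,q) − E_g(p,q) = (1/f′(p)) · B_F(g(q), g(p)), where B_F(a,b) = F(a) − F(b) − (a − b)F′(b) is the Bregman divergence of F. In particular, the quasi-arithmetic 1-divergence I₁^{f,g}[p:q] = ∫ (E_f(p,q) − E_g(p,q)) dμ equals the conformal Bregman representational divergence ∫ (1/f′(p)) B_F(g(q), g(p)) dμ. -/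
open Set MeasureTheory Filter Topology

/-! Since `F ∘ g = f` near every `p > 0`, the chain rule gives `f′(p) = F′(g(p)) g′(p)`, so
`E_g(p,q) = (g(q) − g(p)) F′(g(p)) / f′(p)`; subtracting this from `E_f(p,q)` leaves
`(F(g(q)) − F(g(p)) − (g(q) − g(p)) F′(g(p))) / f′(p)`, pointwise and hence after integration. -/

def bregmanDiv (F F' : ℝ → ℝ) (a b : ℝ) : ℝ := F a - F b - (a - b) * F' b

theorem HasDerivAt.of_comp_of_leftInvOn {f g ginv : ℝ → ℝ} {s : Set ℝ} {a c d : ℝ}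
    (hs : s ∈ 𝓝 a) (hinv : LeftInvOn ginv g s) (hF : HasDerivAt (f ∘ ginv) c (g a))
    (hg : HasDerivAt g d a) : HasDerivAt f (c * d) a := by
  have hf_eq : f ∘ ginv ∘ g =ᶠ[𝓝 a] f :=
    eventually_of_mem hs fun x hx => by simp only [Function.comp, hinv hx]
  exact (hF.comp a hg).congr_of_eventuallyEq hf_eq.symm

theorem div_sub_div_eq_one_div_mul {x u d e c : ℝ} (hd : d = c * e) (hd0 : d ≠ 0) :
    x / d - u / e = 1 / d * (x - u * c) := by
  have he : e ≠ 0 := right_ne_zero_of_mul (hd ▸ hd0)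
  have hc : c ≠ 0 := left_ne_zero_of_mul (hd ▸ hd0)
  subst hd
  field_simp

theorem sub_div_sub_sub_div_eq_one_div_mul_bregmanDiv {f g f' g' ginv F' : ℝ → ℝ}
    {s : Set ℝ} (hs : IsOpen s) (hinv : LeftInvOn ginv g s) {a b : ℝ} (ha : a ∈ s) (hb : b ∈ s)
    (hf : HasDerivAt f (f' a) a) (hg : HasDerivAt g (g' a) a)
    (hF : HasDerivAt (f ∘ ginv) (F' (g a)) (g a)) (hf'a : f' a ≠ 0) :
    (f b - f a) / f' a - (g b - g a) / g' a =
      1 / f' a * bregmanDiv (f ∘ ginv) F' (g b) (g a) := by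
  have hchain : f' a = F' (g a) * g' a :=
    hf.unique (hF.of_comp_of_leftInvOn (hs.mem_nhds ha) hinv hg)
  rw [bregmanDiv, Function.comp_apply, Function.comp_apply, hinv ha, hinv hb]
  exact div_sub_div_eq_one_div_mul hchain hf'a

theorem one_divergence_eq_conformal_bregman_general {X : Type*} [MeasurableSpace X]
    (μ : Measure X) (p q : X → ℝ) (hppos : ∀ x, 0 < p x) (hqpos : ∀ x, 0 < q x)
    (f g f' g' ginv F' : ℝ → ℝ)
    (hf' : ∀ x ∈ Ioi (0 : ℝ), HasDerivAt f (f' x) x)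
    (hg' : ∀ x ∈ Ioi (0 : ℝ), HasDerivAt g (g' x) x)
    (hf'pos : ∀ x ∈ Ioi (0 : ℝ), 0 < f' x)
    (hginv : ∀ x ∈ Ioi (0 : ℝ), ginv (g x) = x)
    (hF' : ∀ y ∈ g '' Ioi (0 : ℝ), HasDerivAt (f ∘ ginv) (F' y) y) :
    (∀ a b : ℝ, 0 < a → 0 < b →
      (f b - f a) / f' a - (g b - g a) / g' a =
        (1 / f' a) *
          ((f ∘ ginv) (g b) - (f ∘ ginv) (g a) - (g b - g a) * F' (g a))) ∧
    ∫ x, ((f (q x) - f (p x)) / f' (p x) - (g (q x) - g (p x)) / g' (p x)) ∂μ =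
      ∫ x, (1 / f' (p x)) *
        ((f ∘ ginv) (g (q x)) - (f ∘ ginv) (g (p x)) -
          (g (q x) - g (p x)) * F' (g (p x))) ∂μ := by
  have pointwise : ∀ a b : ℝ, 0 < a → 0 < b →
      (f b - f a) / f' a - (g b - g a) / g' a =
        1 / f' a * bregmanDiv (f ∘ ginv) F' (g b) (g a) := fun a b ha hb =>
    sub_div_sub_sub_div_eq_one_div_mul_bregmanDiv isOpen_Ioi hginv ha hb (hf' a ha) (hg' a ha)
      (hF' (g a) (mem_image_of_mem g ha)) (hf'pos a ha).ne'
  exact ⟨pointwise, integral_congr_ae <| .of_forall fun x =>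
    pointwise (p x) (q x) (hppos x) (hqpos x)⟩

/-- With F = f ∘ g⁻¹ differentiable and strictly convex (derivative F′)
on the range of g, the scalar 1-divergence is a conformal Bregman representational
divergence: E_f(p,q) − E_g(p,q) = (1/f′(p)) · B_F(g(q), g(p)), where
B_F(a,b) = F(a) − F(b) − (a−b)F′(b); consequently the integral 1-divergence equals
the integral of the conformal Bregman divergence. -/
theorem one_divergence_eq_conformal_bregman {X : Type*} [MeasurableSpace X]
    (μ : Measure X) (p q : X → ℝ) (hppos : ∀ x, 0 < p x) (hqpos : ∀ x, 0 < q x)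
    (f g f' g' ginv F' : ℝ → ℝ)
    (hf_mono : StrictMonoOn f (Ioi 0)) (hg_mono : StrictMonoOn g (Ioi 0))
    (hf' : ∀ x ∈ Ioi (0 : ℝ), HasDerivAt f (f' x) x)
    (hg' : ∀ x ∈ Ioi (0 : ℝ), HasDerivAt g (g' x) x)
    (hf'pos : ∀ x ∈ Ioi (0 : ℝ), 0 < f' x)
    (hg'pos : ∀ x ∈ Ioi (0 : ℝ), 0 < g' x)
    (hginv : ∀ x ∈ Ioi (0 : ℝ), ginv (g x) = x)
    (hF' : ∀ y ∈ g '' Ioi (0 : ℝ), HasDerivAt (f ∘ ginv) (F' y) y)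
    (hconv : StrictConvexOn ℝ (g '' Ioi 0) (f ∘ ginv)) :
    (∀ a b : ℝ, 0 < a → 0 < b →
      (f b - f a) / f' a - (g b - g a) / g' a =
        (1 / f' a) *
          ((f ∘ ginv) (g b) - (f ∘ ginv) (g a) - (g b - g a) * F' (g a))) ∧
    ∫ x, ((f (q x) - f (p x)) / f' (p x) - (g (q x) - g (p x)) / g' (p x)) ∂μ =
      ∫ x, (1 / f' (p x)) *
        ((f ∘ ginv) (g (q x)) - (f ∘ ginv) (g (p x)) -
          (g (q x) - g (p x)) * F' (g (p x))) ∂μ :=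
  one_divergence_eq_conformal_bregman_general μ p q hppos hqpos f g f' g' ginv F' hf' hg' hf'pos
    hginv hF'
end
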